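/- arXiv:math/9912230 — 3 statements merged into one kernel-verified Lean document; each statement's English description precedes it below -/
import Mathlib

section
/- If all coefficients a_1, ..., a_m are nonnegative integers and a_m ≥ 1, then the matrix R = I + C is a nonnegative matrix and R^m has all entries strictly positive (R is primitive). -/
/-!
Since `R = I + C` with `C ≥ 0`, every diagonal entry of `R` is positive, and `R` has positive
entries along the cyclic shift `i ↦ i - 1` on `Fin m` (subdiagonal ones, and `R 0 (m - 1) ≥ a_m`).
For a nonnegative matrix with positive diagonal, `(A ^ k) i j > 0` as soon as `j` is reached from
`i` in at most `k` steps along such positive entries; the shift reaches every `j` from every `i`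
in fewer than `m` steps.
-/

/-- The matrix `R = I + C`, `C` the companion matrix of `x^m - a_1 x^{m-1} - ... - a_m`. -/
def Rmat (m : ℕ) (a : Fin m → ℤ) : Matrix (Fin m) (Fin m) ℤ :=
  fun i j =>
    (if i.val = 0 then a j else if i.val = j.val + 1 then 1 else 0) +
      (if i = j then 1 else 0)

namespace Matrix

variable {n R : Type*} [Fintype n] [DecidableEq n] [Semiring R] [PartialOrder R]
  [IsOrderedRing R] [PosMulStrictMono R] [Nontrivial R] {A : Matrix n n R}

theorem pow_apply_iterate_pos (hA : ∀ i j, 0 ≤ A i j) (hdiag : ∀ i, 0 < A i i) {f : n → n}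
    (hf : ∀ i, 0 < A i (f i)) {k l : ℕ} (hlk : l ≤ k) (i : n) :
    0 < (A ^ k) i (f^[l] i) := by
  induction k generalizing i l with
  | zero =>
    obtain rfl : l = 0 := by omega
    simp
  | succ k ih =>
    have term_le (x j : n) : A i x * (A ^ k) x j ≤ (A ^ (k + 1)) i j := by
      rw [pow_succ', mul_apply]
      exact Finset.single_le_sum (fun y _ => mul_nonneg (hA i y) (pow_apply_nonneg hA k y j))
        (Finset.mem_univ x)
    rcases l with _ | l
    · exact (mul_pos (hdiag i) (ih k.zero_le i)).trans_le (term_le i _)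
    · rw [Function.iterate_succ_apply]
      exact (mul_pos (hf i) (ih (by omega) (f i))).trans_le (term_le (f i) _)

end Matrix

open Fin.NatCast in
theorem Fin.sub_one_iterate {n : ℕ} (l : ℕ) (i : Fin (n + 1)) :
    (fun x : Fin (n + 1) => x - 1)^[l] i = i - l := by
  induction l with
  | zero => simp
  | succ l ih => rw [Function.iterate_succ_apply', ih]; push_cast; abel

theorem Rmat_nonneg (m : ℕ) {a : Fin m → ℤ} (h0 : ∀ i, 0 ≤ a i) (i j : Fin m) :
    0 ≤ Rmat m a i j := by
  have := h0 j
  unfold Rmat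
  split_ifs <;> omega

theorem Rmat_diag_pos (m : ℕ) {a : Fin m → ℤ} (h0 : ∀ i, 0 ≤ a i) (i : Fin m) :
    0 < Rmat m a i i := by
  have := h0 i
  simp only [Rmat, if_true]
  split_ifs <;> omega

theorem Rmat_apply_sub_one_pos (n : ℕ) {a : Fin (n + 1) → ℤ} (h0 : ∀ i, 0 ≤ a i)
    (hlast : 1 ≤ a ⟨n + 1 - 1, by omega⟩) (i : Fin (n + 1)) : 0 < Rmat (n + 1) a i (i - 1) := by
  by_cases hi0 : i = 0
  · subst hi0
    have hwrap : (0 : Fin (n + 1)) - 1 = ⟨n + 1 - 1, by omega⟩ := Fin.ext (by simp)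
    have := h0 0
    rw [hwrap]
    simp only [Rmat, Fin.val_zero, if_true]
    split_ifs <;> omega
  · have hval : (i - 1).val + 1 = i.val := by
      rw [Fin.coe_sub_one, if_neg hi0]
      have := Fin.val_ne_zero_iff.mpr hi0
      omega
    simp only [Rmat, hval, if_true]
    split_ifs <;> omega

/-- if all `a_i ≥ 0` and `a_m ≥ 1`, then `R = I + C` is a nonnegative
matrix and `R^m` has all entries strictly positive (`R` is primitive). -/
theorem Rmat_primitive (m : ℕ) (hm : 0 < m) (a : Fin m → ℤ)
    (h0 : ∀ i, 0 ≤ a i) (hlast : 1 ≤ a ⟨m - 1, by omega⟩) :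
    (∀ i j, 0 ≤ Rmat m a i j) ∧ (∀ i j, 0 < (Rmat m a ^ m) i j) := by
  refine ⟨Rmat_nonneg m h0, fun i j => ?_⟩
  obtain ⟨n, rfl⟩ := Nat.exists_eq_add_one_of_ne_zero hm.ne'
  have hshift := Rmat_apply_sub_one_pos n h0 hlast
  have hpos := Matrix.pow_apply_iterate_pos (Rmat_nonneg _ h0) (Rmat_diag_pos _ h0) hshift
    (k := n + 1) (l := (i - j).val) (i - j).isLt.le i
  rwa [Fin.sub_one_iterate, Fin.cast_val_eq_self, sub_sub_cancel] at hpos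
end

section
/- For p(x) = x^3 - 2 (so a_1 = a_2 = 0, a_3 = 2), the sequence of vectors n_i = R^i (1,1,1)^T with R = [[1,0,2],[1,1,0],[0,1,1]] satisfies lim_{i→∞} (n_i)_1 / (n_i)_2 = 2^{1/3}. -/
/-!
Let `α > 0` and let `R` be `I` plus the companion matrix of `X ^ 3 - α ^ 3`. The row vector
`(1, α, α²)` is a left eigenvector of `R` for the eigenvalue `1 + α`. The deviations
`u = x₀ - α x₁`, `v = x₁ - α x₂` from the eigendirection evolve under the two other eigenvalues
`1 + α ω`, `1 + α ω²` (`ω` a primitive cube root of unity), of modulus squared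
`1 - α + α² < (1 + α)²`. So after dividing by `(1 + α) ^ i`, the coordinates `x₀`, `x₁` of `R ^ i x`
converge to `L / 3` and `L / (3 α)`, where `L = x₀ + α x₁ + α² x₂` is computed at `x`.
-/

open Filter Topology Matrix

lemma apply_pow_mulVec_eq_pow_mul {n R : Type*} [Fintype n] [DecidableEq n] [CommSemiring R]
    {A : Matrix n n R} {f : (n → R) → R} {c : R} (hf : ∀ x, f (A *ᵥ x) = c * f x)
    (i : ℕ) (x : n → R) : f (A ^ i *ᵥ x) = c ^ i * f x := by
  induction i with
  | zero => simp
  | succ i ih => rw [pow_succ', ← mulVec_mulVec, hf, ih, pow_succ', mul_assoc]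

lemma tendsto_div_pow_of_sq_le_mul_pow {f : ℕ → ℝ} {C r s : ℝ} (hr : 0 ≤ r) (hrs : r < s ^ 2)
    (hf : ∀ i, f i ^ 2 ≤ C * r ^ i) : Tendsto (fun i => f i / s ^ i) atTop (𝓝 0) := by
  have hs : 0 < s ^ 2 := hr.trans_lt hrs
  have hsq : Tendsto (fun i => (f i / s ^ i) ^ 2) atTop (𝓝 0) := by
    have hgeom := (tendsto_pow_atTop_nhds_zero_of_lt_one (div_nonneg hr hs.le)
      ((div_lt_one hs).2 hrs)).const_mul C
    rw [mul_zero] at hgeom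
    refine squeeze_zero (fun i => sq_nonneg _) (fun i => ?_) hgeom
    rw [div_pow, ← pow_mul, mul_comm i, pow_mul, div_pow, ← mul_div_assoc]
    exact div_le_div_of_nonneg_right (hf i) (by positivity)
  have habs := hsq.sqrt
  simp only [Real.sqrt_sq_eq_abs, Real.sqrt_zero] at habs
  exact (tendsto_zero_iff_abs_tendsto_zero _).2 habs

section CubeStep

variable (α : ℝ)

def cubeStep : Matrix (Fin 3) (Fin 3) ℝ := !![1, 0, α ^ 3; 1, 1, 0; 0, 1, 1]

def dominantForm (x : Fin 3 → ℝ) : ℝ := x 0 + α * x 1 + α ^ 2 * x 2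

def defect₀ (x : Fin 3 → ℝ) : ℝ := x 0 - α * x 1

def defect₁ (x : Fin 3 → ℝ) : ℝ := x 1 - α * x 2

/-- `|u - α ω² v|²` for a primitive cube root of unity `ω`, where `u = defect₀`, `v = defect₁`;
`cubeStep α` multiplies `u - α ω² v` by `1 + α ω`. -/
def defectNormSq (x : Fin 3 → ℝ) : ℝ :=
  defect₀ α x ^ 2 + α * defect₀ α x * defect₁ α x + α ^ 2 * defect₁ α x ^ 2

lemma cubeStep_mulVec (x : Fin 3 → ℝ) :
    cubeStep α *ᵥ x = ![x 0 + α ^ 3 * x 2, x 0 + x 1, x 1 + x 2] := by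
  ext j
  fin_cases j <;> simp [cubeStep, mulVec, dotProduct, Fin.sum_univ_three]

lemma dominantForm_cubeStep_mulVec (x : Fin 3 → ℝ) :
    dominantForm α (cubeStep α *ᵥ x) = (1 + α) * dominantForm α x := by
  simp only [dominantForm, cubeStep_mulVec, cons_val_zero, cons_val_one, cons_val]
  ring

lemma defectNormSq_cubeStep_mulVec (x : Fin 3 → ℝ) :
    defectNormSq α (cubeStep α *ᵥ x) = (1 - α + α ^ 2) * defectNormSq α x := by
  simp only [defectNormSq, defect₀, defect₁, cubeStep_mulVec, cons_val_zero, cons_val_one,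
    cons_val]
  ring

lemma three_mul_apply_zero (x : Fin 3 → ℝ) :
    3 * x 0 = dominantForm α x + 2 * defect₀ α x + α * defect₁ α x := by
  simp only [dominantForm, defect₀, defect₁]
  ring

lemma three_mul_mul_apply_one (x : Fin 3 → ℝ) :
    3 * α * x 1 = dominantForm α x - defect₀ α x + α * defect₁ α x := by
  simp only [dominantForm, defect₀, defect₁]
  ring

lemma three_mul_sq_defect₀_le (x : Fin 3 → ℝ) :
    3 * defect₀ α x ^ 2 ≤ 4 * defectNormSq α x := by
  unfold defectNormSq
  nlinarith [sq_nonneg (defect₀ α x + 2 * α * defect₁ α x)]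

lemma three_mul_sq_defect₁_le (x : Fin 3 → ℝ) :
    3 * (α * defect₁ α x) ^ 2 ≤ 4 * defectNormSq α x := by
  unfold defectNormSq
  nlinarith [sq_nonneg (2 * defect₀ α x + α * defect₁ α x)]

variable {α}

lemma tendsto_div_pow_of_three_mul_sq_le_defectNormSq (hα : 0 < α) {f : (Fin 3 → ℝ) → ℝ}
    (hf : ∀ x, 3 * f x ^ 2 ≤ 4 * defectNormSq α x) (x : Fin 3 → ℝ) :
    Tendsto (fun i => f (cubeStep α ^ i *ᵥ x) / (1 + α) ^ i) atTop (𝓝 0) := by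
  refine tendsto_div_pow_of_sq_le_mul_pow (C := 4 / 3 * defectNormSq α x) (r := 1 - α + α ^ 2)
    (by nlinarith [sq_nonneg (α - 1)]) (by nlinarith) fun i => ?_
  have h := hf (cubeStep α ^ i *ᵥ x)
  rw [apply_pow_mulVec_eq_pow_mul (defectNormSq_cubeStep_mulVec α)] at h
  linarith

lemma tendsto_apply_zero_div_pow (hα : 0 < α) (x : Fin 3 → ℝ) :
    Tendsto (fun i => (cubeStep α ^ i *ᵥ x) 0 / (1 + α) ^ i) atTop
      (𝓝 (dominantForm α x / 3)) := by
  have hu := tendsto_div_pow_of_three_mul_sq_le_defectNormSq hα (three_mul_sq_defect₀_le α) x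
  have hv := tendsto_div_pow_of_three_mul_sq_le_defectNormSq hα (three_mul_sq_defect₁_le α) x
  have hsum := ((tendsto_const_nhds (x := dominantForm α x)).add
    ((hu.const_mul 2).add hv)).div_const 3
  simp only [mul_zero, add_zero] at hsum
  refine hsum.congr fun i => ?_
  have h := three_mul_apply_zero α (cubeStep α ^ i *ᵥ x)
  rw [apply_pow_mulVec_eq_pow_mul (dominantForm_cubeStep_mulVec α)] at h
  have hpow : (1 + α) ^ i ≠ 0 := by positivity
  field_simp
  linear_combination -h

lemma tendsto_apply_one_div_pow (hα : 0 < α) (x : Fin 3 → ℝ) :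
    Tendsto (fun i => (cubeStep α ^ i *ᵥ x) 1 / (1 + α) ^ i) atTop
      (𝓝 (dominantForm α x / (3 * α))) := by
  have hu := tendsto_div_pow_of_three_mul_sq_le_defectNormSq hα (three_mul_sq_defect₀_le α) x
  have hv := tendsto_div_pow_of_three_mul_sq_le_defectNormSq hα (three_mul_sq_defect₁_le α) x
  have hsum := ((tendsto_const_nhds (x := dominantForm α x)).sub hu).add hv |>.div_const (3 * α)
  simp only [sub_zero, add_zero] at hsum
  refine hsum.congr fun i => ?_
  have h := three_mul_mul_apply_one α (cubeStep α ^ i *ᵥ x)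
  rw [apply_pow_mulVec_eq_pow_mul (dominantForm_cubeStep_mulVec α)] at h
  have hpow : (1 + α) ^ i ≠ 0 := by positivity
  field_simp
  linear_combination -h

theorem tendsto_cubeStep_pow_mulVec_div (hα : 0 < α) {x : Fin 3 → ℝ}
    (hx : dominantForm α x ≠ 0) :
    Tendsto (fun i => (cubeStep α ^ i *ᵥ x) 0 / (cubeStep α ^ i *ᵥ x) 1) atTop (𝓝 α) := by
  have hlim := (tendsto_apply_zero_div_pow hα x).div (tendsto_apply_one_div_pow hα x)
    (by positivity)
  rw [div_div_div_cancel_left' _ _ hx, mul_div_cancel_left₀ α three_ne_zero] at hlim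
  refine hlim.congr fun i => div_div_div_cancel_right₀ ?_ _ _
  positivity

end CubeStep

/-- for `p(x) = x³ - 2`, with `R = I + C = [[1,0,2],[1,1,0],[0,1,1]]` and
`n_i = R^i (1,1,1)ᵀ`, the ratio `(n_i)_1 / (n_i)_2` converges to the real cube root of 2. -/
theorem cube_root_two_limit (R : Matrix (Fin 3) (Fin 3) ℝ)
    (hR : R = !![1, 0, 2; 1, 1, 0; 0, 1, 1]) :
    Tendsto (fun i : ℕ => (R ^ i).mulVec ![1, 1, 1] 0 / (R ^ i).mulVec ![1, 1, 1] 1)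
      atTop (nhds ((2 : ℝ) ^ ((1 : ℝ) / 3))) := by
  set α : ℝ := (2 : ℝ) ^ ((1 : ℝ) / 3)
  have hα : 0 < α := by positivity
  have hcube : α ^ 3 = 2 := by
    rw [show α = (2 : ℝ) ^ ((3 : ℕ)⁻¹ : ℝ) by norm_num [α],
      Real.rpow_inv_natCast_pow (by norm_num) (by norm_num)]
  have hL : dominantForm α ![1, 1, 1] ≠ 0 := by
    simp only [dominantForm, cons_val_zero, cons_val_one, cons_val, mul_one]
    positivity
  rw [hR, ← hcube]
  exact tendsto_cubeStep_pow_mulVec_div hα hL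
end

section
/- Every real algebraic number that is the largest real root of some monic integer polynomial arises as the limit of ratios n_1(W_i)/n_2(W_i) of signed letter counts for a suitable replacement sequence, provided the dominance condition |1+λ| > |1+μ| holds for all other roots μ and the initial count vector has nonzero dominant component; in particular such λ is computable from the integer sequences (n_j(W_i))_i. -/
/-- Letters: an index in `Fin m` together with a sign (`true` = `+`). -/
abbrev Letter (m : ℕ) := Fin m × Bool

/-- Replacement of a single letter `(i, s)`: `|a i|` copies of letter `1` (index `0`),
with sign `s` if `a i ≥ 0` and `!s` otherwise, followed by `(i, s)` and,
when `i < m`, by `(i+1, s)`. -/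
def repl (m : ℕ) [NeZero m] (a : Fin m → ℤ) (l : Letter m) : List (Letter m) :=
  List.replicate (a l.1).natAbs (0, if 0 ≤ a l.1 then l.2 else !l.2)
    ++ [l]
    ++ if h : l.1.val + 1 < m then [(⟨l.1.val + 1, h⟩, l.2)] else []

/-- The induced replacement map `R*` on words: replace every letter and concatenate. -/
def replWord (m : ℕ) [NeZero m] (a : Fin m → ℤ) (W : List (Letter m)) : List (Letter m) :=
  W.flatMap (repl m a)

/-- Signed counting map `n`: the `i`-th component is the number of occurrences of
`(i, +)` minus the number of occurrences of `(i, −)`. -/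
def countVec (m : ℕ) (W : List (Letter m)) : Fin m → ℤ :=
  fun i => (W.count (i, true) : ℤ) - (W.count (i, false) : ℤ)

/-!
Each letter `(i, s)` is replaced by a word whose signed count vector is `±` the `i`-th column of
`R = I + C`, so `n(W_i) = R^i n(W₀)`. In the eigenbasis `b`, `n(W_i) = ∑ c_k (1 + μ_k)^i b_k`.
An eigenvector `x` of `R` for `1 + μ` satisfies `x_j = μ x_{j+1}` (rows below the first), so it is
determined up to scale by `μ`; hence `μ_k ≠ λ` for `k ≠ 0`, and by dominance
`(1 + λ)^{-i} n(W_i) → c_0 b_0 = c_0 (λ^{m-1-j})_j`. The ratio of the first two coordinates tends to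
`λ^{m-1} / λ^{m-2} = λ`; when `λ = 0` the first coordinate is an integer tending to `0`, hence
eventually `0`.
-/

open Polynomial Filter Matrix Topology

section Counting

variable {m : ℕ}

@[simp]
lemma countVec_nil : countVec m [] = 0 := by
  funext i; simp [countVec]

lemma countVec_append (A B : List (Letter m)) :
    countVec m (A ++ B) = countVec m A + countVec m B := by
  funext i
  simp only [countVec, List.count_append, Pi.add_apply]
  push_cast; ring

lemma countVec_singleton (i : Fin m) (s : Bool) :
    countVec m [(i, s)] = Pi.single i (if s then 1 else -1) := by
  funext j
  rcases eq_or_ne j i with rfl | h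
  · cases s <;> simp [countVec]
  · cases s <;> simp [countVec, h, h.symm]

lemma countVec_replicate (n : ℕ) (l : Letter m) :
    countVec m (List.replicate n l) = n • countVec m [l] := by
  induction n with
  | zero => simp
  | succ n ih =>
    rw [List.replicate_succ', countVec_append, ih, succ_nsmul]

lemma natAbs_nsmul_countVec_singleton (z : ℤ) (j : Fin m) (s : Bool) :
    z.natAbs • countVec m [(j, if 0 ≤ z then s else !s)] = z • countVec m [(j, s)] := by
  rcases le_or_gt 0 z with hz | hz
  · rw [if_pos hz, ← natCast_zsmul, Int.natAbs_of_nonneg hz]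
  · rw [if_neg hz.not_ge, ← natCast_zsmul, Int.ofNat_natAbs_of_nonpos hz.le, neg_smul,
      ← smul_neg]
    congr 1
    cases s <;> simp [countVec_singleton, ← Pi.single_neg]

lemma countVec_repl [NeZero m] (a : Fin m → ℤ) (l : Letter m) :
    countVec m (repl m a l) = Rmat m a *ᵥ countVec m [l] := by
  obtain ⟨i, s⟩ := l
  rw [repl, countVec_append, countVec_append, countVec_replicate,
    natAbs_nsmul_countVec_singleton]
  funext r
  by_cases h : i.val + 1 < m <;>
  simp only [h, dite_true, dite_false, countVec_singleton, countVec_nil, mulVec_single,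
    Pi.add_apply, Pi.smul_apply, Pi.single_apply, Pi.zero_apply, col_apply, Rmat, Fin.ext_iff,
    MulOpposite.smul_eq_mul_unop, MulOpposite.unop_op, smul_eq_mul, Fin.val_zero] <;>
  split_ifs <;> omega

lemma countVec_cons (l : Letter m) (W : List (Letter m)) :
    countVec m (l :: W) = countVec m [l] + countVec m W :=
  countVec_append [l] W

lemma countVec_replWord [NeZero m] (a : Fin m → ℤ) (W : List (Letter m)) :
    countVec m (replWord m a W) = Rmat m a *ᵥ countVec m W := by
  induction W with
  | nil => simp [replWord]
  | cons l W ih =>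
    rw [replWord, List.flatMap_cons, countVec_append, ← replWord, ih, countVec_repl,
      countVec_cons l W, mulVec_add]

lemma countVec_iterate_replWord [NeZero m] (a : Fin m → ℤ) (W : List (Letter m)) (n : ℕ) :
    countVec m ((replWord m a)^[n] W) = (Rmat m a ^ n) *ᵥ countVec m W := by
  induction n with
  | zero => simp
  | succ n ih =>
    rw [Function.iterate_succ_apply', countVec_replWord, ih, mulVec_mulVec, ← pow_succ']

lemma intCast_countVec_iterate_replWord {K : Type*} [CommRing K] [NeZero m] (a : Fin m → ℤ)
    (W : List (Letter m)) (n : ℕ) (j : Fin m) :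
    (countVec m ((replWord m a)^[n] W) j : K)
      = (toLin' ((Rmat m a).map (Int.cast : ℤ → K)) ^ n) (fun j => (countVec m W j : K)) j := by
  have hmap : (Rmat m a).map (Int.cast : ℤ → K) ^ n = (Rmat m a ^ n).map (Int.castRingHom K) :=
    ((Rmat m a).map_pow (Int.castRingHom K) n).symm
  rw [← toLin'_pow, toLin'_apply, hmap, countVec_iterate_replWord]
  exact (Int.castRingHom K).map_mulVec _ _ j

end Counting

section Eigenvectors

variable {m : ℕ} {K : Type*}

lemma Rmat_map_mulVec_succ [Ring K] (a : Fin m → ℤ) (x : Fin m → K) (j : ℕ) (h : j + 1 < m) :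
    ((Rmat m a).map (Int.cast : ℤ → K) *ᵥ x) ⟨j + 1, h⟩ = x ⟨j, by omega⟩ + x ⟨j + 1, h⟩ := by
  have hrow : ∀ t : Fin m, ((Rmat m a ⟨j + 1, h⟩ t : ℤ) : K)
      = (if t = ⟨j, by omega⟩ then 1 else 0) + (if t = ⟨j + 1, h⟩ then 1 else 0) := by
    intro t
    simp only [Rmat, Fin.ext_iff, Nat.add_one_ne_zero, if_false, Nat.add_right_cancel_iff]
    split_ifs <;> first | (exfalso; omega) | simp
  simp only [mulVec, dotProduct, map_apply, hrow, add_mul, ite_mul, one_mul, zero_mul,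
    Finset.sum_add_distrib, Finset.sum_ite_eq', Finset.mem_univ, if_true]

lemma eq_pow_mul_of_Rmat_mulVec_eq_smul [CommRing K] {a : Fin m → ℤ} {μ : K} {x : Fin m → K}
    (hx : (Rmat m a).map (Int.cast : ℤ → K) *ᵥ x = (1 + μ) • x) (j : Fin m) :
    x j = μ ^ (m - 1 - j) * x ⟨m - 1, by have := j.pos; omega⟩ := by
  have hstep : ∀ i (h : i + 1 < m), x ⟨i, by omega⟩ = μ * x ⟨i + 1, h⟩ := by
    intro i h
    have hrow := congrFun hx ⟨i + 1, h⟩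
    rw [Rmat_map_mulVec_succ, Pi.smul_apply, smul_eq_mul] at hrow
    linear_combination hrow
  have hshift : ∀ d i (h : i + d < m), x ⟨i, by omega⟩ = μ ^ d * x ⟨i + d, h⟩ := by
    intro d
    induction d with
    | zero => simp
    | succ d ih =>
      intro i h
      rw [hstep i (by omega), ih (i + 1) (by omega), pow_succ]
      simp only [Nat.add_right_comm i 1 d, add_assoc, mul_assoc, mul_left_comm μ]
  have hj := hshift (m - 1 - j) j (by omega)
  simp only [Fin.eta] at hj
  rw [hj]
  congr 3
  omega

lemma Rmat_eigenbasis_eigenvalues_injective [CommRing K] [Nontrivial K] {a : Fin m → ℤ}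
    (b : Module.Basis (Fin m) K (Fin m → K)) {μ : Fin m → K}
    (heig : ∀ k, (Rmat m a).map (Int.cast : ℤ → K) *ᵥ b k = (1 + μ k) • b k) :
    Function.Injective μ := by
  intro k k' hkk'
  by_contra hne
  have hlast : ∀ k, b k = b k ⟨m - 1, by have := k.pos; omega⟩ •
      fun j : Fin m => μ k ^ (m - 1 - (j : ℕ)) := by
    intro k
    funext j
    rw [Pi.smul_apply, smul_eq_mul, mul_comm, eq_pow_mul_of_Rmat_mulVec_eq_smul (heig k)]
  set c := fun k => b k ⟨m - 1, by have := k.pos; omega⟩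
  have hdep : c k' • b k = c k • b k' := by
    rw [hlast k, hlast k', hkk', smul_smul, smul_smul, mul_comm]
  have hc : c k' = 0 := by
    simpa [Finsupp.single_apply, Ne.symm hne] using congrArg (fun v => b.repr v k) hdep
  exact b.ne_zero k' (by rw [hlast k', show b k' _ = 0 from hc, zero_smul])

end Eigenvectors

section PowerIteration

variable {ι 𝕜 M : Type*} [Fintype ι]

lemma pow_apply_eq_sum_of_eigenbasis {R : Type*} [CommSemiring R] [AddCommMonoid M] [Module R M]
    (b : Module.Basis ι R M) {f : Module.End R M} {ν : ι → R} (hf : ∀ k, f (b k) = ν k • b k)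
    (v : M) (n : ℕ) : (f ^ n) v = ∑ k, (ν k ^ n * b.repr v k) • b k := by
  have hpow : ∀ k, (f ^ n) (b k) = ν k ^ n • b k := by
    intro k
    induction n with
    | zero => simp
    | succ n ih => rw [pow_succ', Module.End.mul_apply, ih, map_smul, hf, smul_smul, ← pow_succ]
  conv_lhs => rw [← b.sum_repr v]
  simp only [map_sum, map_smul, hpow, smul_smul, mul_comm]

lemma tendsto_inv_pow_smul_pow_apply_of_eigenbasis [NormedField 𝕜] [NormedAddCommGroup M]
    [NormedSpace 𝕜 M] (b : Module.Basis ι 𝕜 M) {f : Module.End 𝕜 M} {ν : ι → 𝕜}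
    (hf : ∀ k, f (b k) = ν k • b k) {k₀ : ι} (hν₀ : ν k₀ ≠ 0)
    (hdom : ∀ k, k ≠ k₀ → ‖ν k‖ < ‖ν k₀‖) (v : M) :
    Tendsto (fun n : ℕ => (ν k₀ ^ n)⁻¹ • (f ^ n) v) atTop (𝓝 (b.repr v k₀ • b k₀)) := by
  classical
  have hterm : ∀ k, Tendsto (fun n : ℕ => ((ν k / ν k₀) ^ n * b.repr v k) • b k) atTop
      (𝓝 (if k = k₀ then b.repr v k₀ • b k₀ else 0)) := by
    intro k
    rcases eq_or_ne k k₀ with rfl | hk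
    · simp [div_self hν₀]
    · have hlt : ‖ν k / ν k₀‖ < 1 := by
        rw [norm_div, div_lt_one ((norm_nonneg _).trans_lt (hdom k hk))]
        exact hdom k hk
      simpa [hk] using
        ((tendsto_pow_atTop_nhds_zero_of_norm_lt_one hlt).mul_const (b.repr v k)).smul_const (b k)
  have hsum := tendsto_finsetSum Finset.univ fun k _ => hterm k
  rw [Finset.sum_ite_eq' Finset.univ k₀, if_pos (Finset.mem_univ _)] at hsum
  refine hsum.congr fun n => ?_
  rw [pow_apply_eq_sum_of_eigenbasis b hf, Finset.smul_sum]
  refine Finset.sum_congr rfl fun k _ => ?_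
  rw [smul_smul, div_pow, div_eq_inv_mul, mul_assoc]

lemma tendsto_div_of_tendsto_mul_pow {α : Type*} [NormedField 𝕜] {l : Filter α}
    {s u v : α → 𝕜} {c x : 𝕜} {n : ℕ} (hs : ∀ i, s i ≠ 0) (hc : c ≠ 0) (hx : x ≠ 0)
    (hu : Tendsto (fun i => s i * u i) l (𝓝 (c * x ^ (n + 1))))
    (hv : Tendsto (fun i => s i * v i) l (𝓝 (c * x ^ n))) :
    Tendsto (fun i => u i / v i) l (𝓝 x) := by
  have hlim : c * x ^ (n + 1) / (c * x ^ n) = x := by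
    rw [mul_div_mul_left _ _ hc, pow_succ, mul_div_cancel_left₀ _ (pow_ne_zero _ hx)]
  rw [← hlim]
  exact (hu.div hv (mul_ne_zero hc (pow_ne_zero _ hx))).congr fun i =>
    mul_div_mul_left _ _ (hs i)

lemma eventually_eq_zero_of_tendsto_intCast {α : Type*} {l : Filter α} {u : α → ℤ}
    (h : Tendsto (fun i => (u i : ℂ)) l (𝓝 0)) : ∀ᶠ i in l, u i = 0 := by
  filter_upwards [Metric.tendsto_nhds.mp h 1 one_pos] with i hi
  rw [dist_zero_right, Complex.norm_intCast] at hi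
  by_contra hne
  have : (1 : ℝ) ≤ |(u i : ℝ)| := by exact_mod_cast Int.one_le_abs hne
  linarith

end PowerIteration

theorem largest_root_from_replacement_counts_general (m : ℕ) [NeZero m] (hm : 1 < m)
    (a : Fin m → ℤ)
    (p : ℂ[X])
    (lam : ℝ)
    (hdom : ∀ μ ∈ p.roots, μ ≠ (lam : ℂ) → ‖1 + μ‖ < |1 + lam|)
    (b : Module.Basis (Fin m) ℂ (Fin m → ℂ)) (μ : Fin m → ℂ)
    (hμroots : ∀ k, μ k ∈ p.roots) (hμ0 : μ 0 = (lam : ℂ))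
    (heig : ∀ k, ((Rmat m a).map (Int.cast : ℤ → ℂ)).mulVec (b k) = (1 + μ k) • b k)
    (hb0 : b 0 = fun j : Fin m => (lam : ℂ) ^ (m - 1 - j.val))
    (W₀ : List (Letter m))
    (hc : b.repr (fun j => (countVec m W₀ j : ℂ)) 0 ≠ 0) :
    Tendsto
      (fun i : ℕ =>
        (countVec m ((replWord m a)^[i] W₀) 0 : ℝ) /
          (countVec m ((replWord m a)^[i] W₀) ⟨1, hm⟩ : ℝ))
      atTop (nhds lam) := by
  set u : ℕ → Fin m → ℤ := fun i => countVec m ((replWord m a)^[i] W₀)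
  have hdom' : ∀ k, k ≠ 0 → ‖1 + μ k‖ < ‖1 + μ 0‖ := fun k hk => by
    have := hdom _ (hμroots k) (hμ0 ▸ (Rmat_eigenbasis_eigenvalues_injective b heig).ne hk)
    rw [hμ0]
    exact_mod_cast this
  have hne : 1 + μ 0 ≠ 0 :=
    norm_pos_iff.mp ((norm_nonneg _).trans_lt (hdom' ⟨1, hm⟩ (by simp [Fin.ext_iff])))
  have hlim := tendsto_inv_pow_smul_pow_apply_of_eigenbasis b
    (f := toLin' ((Rmat m a).map Int.cast)) (by simpa using heig) hne hdom'
    (fun j => (countVec m W₀ j : ℂ))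
  have hcoord : ∀ j : Fin m, Tendsto (fun i => ((1 + μ 0) ^ i)⁻¹ * (u i j : ℂ)) atTop
      (𝓝 (b.repr (fun j => (countVec m W₀ j : ℂ)) 0 * lam ^ (m - 1 - j.val))) := fun j => by
    simpa [Function.comp_def, u, intCast_countVec_iterate_replWord, hb0] using
      ((continuous_apply j).tendsto _).comp hlim
  have hm1 : m - 1 = m - 2 + 1 := by omega
  rcases eq_or_ne lam 0 with rfl | hlam
  · have hnum : ∀ᶠ i in atTop, u i 0 = 0 :=
      eventually_eq_zero_of_tendsto_intCast (by simpa [hμ0, hm1] using hcoord 0)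
    refine tendsto_const_nhds.congr' ?_
    filter_upwards [hnum] with i hi
    simp only [u] at hi
    simp [hi]
  · rw [← tendsto_ofReal_iff]
    push_cast
    refine tendsto_div_of_tendsto_mul_pow (n := m - 2)
      (fun i => inv_ne_zero (pow_ne_zero i hne)) hc (by exact_mod_cast hlam) ?_ ?_
    · simpa [hm1] using hcoord 0
    · simpa [Nat.sub_sub] using hcoord ⟨1, hm⟩

/-- for a monic integer polynomial `p` with distinct roots whose largest
real root `λ` satisfies the dominance condition `|1+λ| > |1+μ|` for all other roots `μ`,
and any initial word `W₀` whose signed count vector has nonzero coefficient on the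
dominant eigenvector of `R = I + C` in an eigenbasis, the ratios
`n₁(W_i)/n₂(W_i)` of signed letter counts of `W_i = (R*)^i(W₀)` converge to `λ`. -/
theorem largest_root_from_replacement_counts (m : ℕ) [NeZero m] (hm : 1 < m)
    (a : Fin m → ℤ)
    (p : ℂ[X]) (hp : p = X ^ m - ∑ i : Fin m, C (a i : ℂ) * X ^ (m - 1 - i.val))
    (hdistinct : p.roots.Nodup)
    (lam : ℝ) (hroot : p.IsRoot (lam : ℂ))
    (hlargest : ∀ x : ℝ, p.IsRoot (x : ℂ) → x ≤ lam)
    (hdom : ∀ μ ∈ p.roots, μ ≠ (lam : ℂ) → ‖1 + μ‖ < |1 + lam|)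
    (b : Module.Basis (Fin m) ℂ (Fin m → ℂ)) (μ : Fin m → ℂ)
    (hμroots : ∀ k, μ k ∈ p.roots) (hμ0 : μ 0 = (lam : ℂ))
    (heig : ∀ k, ((Rmat m a).map (Int.cast : ℤ → ℂ)).mulVec (b k) = (1 + μ k) • b k)
    (hb0 : b 0 = fun j : Fin m => (lam : ℂ) ^ (m - 1 - j.val))
    (W₀ : List (Letter m))
    (hc : b.repr (fun j => (countVec m W₀ j : ℂ)) 0 ≠ 0) :
    Tendsto
      (fun i : ℕ =>
        (countVec m ((replWord m a)^[i] W₀) 0 : ℝ) /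
          (countVec m ((replWord m a)^[i] W₀) ⟨1, hm⟩ : ℝ))
      atTop (nhds lam) :=
  largest_root_from_replacement_counts_general m hm a p lam hdom b μ hμroots hμ0 heig hb0 W₀ hc
end
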